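/- arXiv:1206.2448 — 2 statements merged into one kernel-verified Lean document; each statement's English description precedes it below -/
import Mathlib

section
/- Consider the capacity allocation game with uniform payoffs (all weights b_r = 1) and isoelastic utilities u_r(x) = w_r x^{1-γ}/(1-γ) with w_r > 0 and 0 < γ < 1, on a network with link capacities c_l > 0 and 0-1 routing matrix A where every flow traverses at least one link. Then there exists a pure Nash equilibrium S whose social welfare W(S) = Σ_r u_r(min_{l : a_{lr}=1} s_{lr}) equals the maximal value of social welfare over all feasible strategy profiles, and this maximal value equals the optimal value of the NUM problem maximize Σ_r u_r(x_r) subject to A x ≤ c, x ≥ 0. In particular, the Price of Stability (the ratio of the maximal social welfare over all profiles to the maximal social welfare over all pure Nash equilibria) equals 1. -/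
/-!
With uniform weights the social welfare is an exact potential of the game: a unilateral
deviation of link `l` changes only the minima of the flows through `l`, and these make up
exactly the payoff of `l`. Hence every welfare-maximising profile is a Nash equilibrium.
The welfare of a feasible profile is the NUM objective at its vector of path minima, which is
NUM-feasible; conversely a NUM-feasible rate vector is realised by letting every link on the
path of `r` allocate `x r` to it. So welfare maximisers come from NUM maximisers, which exist
because the NUM feasible set is compact (every flow uses a link of finite capacity) and the
isoelastic utilities are continuous for `γ < 1`.
-/

open Finset

/-- The minimum allocation for flow `r` over all links on its path. -/
noncomputable def linkMin {L R : ℕ} (a : Fin L → Fin R → Bool)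
    (S : Fin L → Fin R → ℝ) (r : Fin R) : ℝ :=
  sInf {v : ℝ | ∃ k, a k r = true ∧ v = S k r}

/-- Feasibility of a single player's (link's) strategy. -/
def FeasibleStrat {L R : ℕ} (a : Fin L → Fin R → Bool) (c : Fin L → ℝ)
    (l : Fin L) (s : Fin R → ℝ) : Prop :=
  (∀ r, 0 ≤ s r) ∧ (∀ r, a l r = false → s r = 0) ∧
    (∑ r ∈ Finset.univ.filter (fun r => a l r = true), s r) ≤ c l

/-- Feasibility of a full strategy profile. -/
def FeasibleProfile {L R : ℕ} (a : Fin L → Fin R → Bool) (c : Fin L → ℝ)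
    (S : Fin L → Fin R → ℝ) : Prop :=
  ∀ l, FeasibleStrat a c l (S l)

/-- Payoff of player `l`: weighted utilities of minimum allocations of its flows. -/
noncomputable def payoff {L R : ℕ} (a : Fin L → Fin R → Bool)
    (b : Fin R → ℝ) (u : Fin R → ℝ → ℝ) (l : Fin L) (S : Fin L → Fin R → ℝ) : ℝ :=
  ∑ r ∈ Finset.univ.filter (fun r => a l r = true), b r * u r (linkMin a S r)

/-- Pure Nash equilibrium: no player can strictly improve by a unilateral feasible deviation. -/
def NashEq {L R : ℕ} (a : Fin L → Fin R → Bool) (c : Fin L → ℝ)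
    (b : Fin R → ℝ) (u : Fin R → ℝ → ℝ) (S : Fin L → Fin R → ℝ) : Prop :=
  ∀ l s', FeasibleStrat a c l s' →
    payoff a b u l (Function.update S l s') ≤ payoff a b u l S

/-- Social welfare of a profile. -/
noncomputable def welfare {L R : ℕ} (a : Fin L → Fin R → Bool)
    (u : Fin R → ℝ → ℝ) (S : Fin L → Fin R → ℝ) : ℝ :=
  ∑ r, u r (linkMin a S r)

open Function

section CapacityGame

variable {L R : ℕ} (a : Fin L → Fin R → Bool)

def numFeasibleSet (c : Fin L → ℝ) : Set (Fin R → ℝ) :=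
  {x | (∀ r, 0 ≤ x r) ∧ ∀ l, ∑ r ∈ univ.filter (fun r => a l r = true), x r ≤ c l}

def profileOfRates (x : Fin R → ℝ) : Fin L → Fin R → ℝ :=
  fun l r => if a l r = true then x r else 0

lemma linkMin_le {S : Fin L → Fin R → ℝ} {l : Fin L} {r : Fin R} (hl : a l r = true) :
    linkMin a S r ≤ S l r := by
  refine csInf_le ?_ ⟨l, hl, rfl⟩
  refine ((Set.finite_range fun k => S k r).subset ?_).bddBelow
  rintro v ⟨k, -, rfl⟩
  exact ⟨k, rfl⟩

lemma le_linkMin {S : Fin L → Fin R → ℝ} {r : Fin R} {m : ℝ} (hflow : ∃ l, a l r = true)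
    (h : ∀ k, a k r = true → m ≤ S k r) : m ≤ linkMin a S r := by
  obtain ⟨l, hl⟩ := hflow
  refine le_csInf ⟨S l r, l, hl, rfl⟩ ?_
  rintro v ⟨k, hk, rfl⟩
  exact h k hk

lemma linkMin_update_of_eq_false {S : Fin L → Fin R → ℝ} {l : Fin L} {r : Fin R}
    (s : Fin R → ℝ) (h : a l r = false) :
    linkMin a (update S l s) r = linkMin a S r := by
  unfold linkMin
  congr 1
  ext v
  refine exists_congr fun k => and_congr_right fun hk => ?_
  rw [update_of_ne (by rintro rfl; simp [h] at hk)]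

lemma linkMin_profileOfRates {x : Fin R → ℝ} {r : Fin R} (hflow : ∃ l, a l r = true) :
    linkMin a (profileOfRates a x) r = x r := by
  obtain ⟨l, hl⟩ := hflow
  refine le_antisymm ?_ (le_linkMin a ⟨l, hl⟩ fun k hk => by simp [profileOfRates, hk])
  simpa [profileOfRates, hl] using linkMin_le a (S := profileOfRates a x) hl

lemma welfare_profileOfRates (u : Fin R → ℝ → ℝ) {x : Fin R → ℝ}
    (hflow : ∀ r, ∃ l, a l r = true) :
    welfare a u (profileOfRates a x) = ∑ r, u r (x r) :=
  sum_congr rfl fun r _ => by rw [linkMin_profileOfRates a (hflow r)]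

lemma feasibleProfile_profileOfRates {c : Fin L → ℝ} {x : Fin R → ℝ}
    (hx : x ∈ numFeasibleSet a c) : FeasibleProfile a c (profileOfRates a x) := by
  intro l
  refine ⟨fun r => ?_, fun r hr => by simp [profileOfRates, hr], ?_⟩
  · unfold profileOfRates
    split_ifs
    exacts [hx.1 r, le_rfl]
  · refine le_of_eq_of_le (sum_congr rfl fun r hr => ?_) (hx.2 l)
    simp [profileOfRates, (mem_filter.1 hr).2]

lemma FeasibleProfile.linkMin_mem_numFeasibleSet {c : Fin L → ℝ} {S : Fin L → Fin R → ℝ}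
    (hS : FeasibleProfile a c S) (hflow : ∀ r, ∃ l, a l r = true) :
    (fun r => linkMin a S r) ∈ numFeasibleSet a c :=
  ⟨fun r => le_linkMin a (hflow r) fun k _ => (hS k).1 r,
    fun l => (sum_le_sum fun _ hr => linkMin_le a (mem_filter.1 hr).2).trans (hS l).2.2⟩

lemma numFeasibleSet_nonempty {c : Fin L → ℝ} (hc : ∀ l, 0 ≤ c l) :
    (numFeasibleSet a c).Nonempty :=
  ⟨0, fun _ => le_rfl, fun l => by simpa using hc l⟩

lemma isCompact_numFeasibleSet (c : Fin L → ℝ) (hflow : ∀ r, ∃ l, a l r = true) :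
    IsCompact (numFeasibleSet a c) := by
  choose path hpath using hflow
  have hclosed : IsClosed (numFeasibleSet a c) := by
    simp only [numFeasibleSet, Set.ofPred_and, Set.ofPred_forall]
    exact (isClosed_iInter fun r => isClosed_le continuous_const (continuous_apply r)).inter
      (isClosed_iInter fun l =>
        isClosed_le (continuous_finsetSum _ fun r _ => continuous_apply r) continuous_const)
  refine (isCompact_Icc (a := 0) (b := fun r => c (path r))).of_isClosed_subset hclosed ?_
  intro x ⟨hx0, hxc⟩
  refine ⟨hx0, fun r => (single_le_sum (fun i _ => hx0 i) ?_).trans (hxc (path r))⟩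
  simp [hpath r]

lemma payoff_update_sub_payoff (u : Fin R → ℝ → ℝ) (S : Fin L → Fin R → ℝ) (l : Fin L)
    (s : Fin R → ℝ) :
    payoff a (fun _ => 1) u l (update S l s) - payoff a (fun _ => 1) u l S =
      welfare a u (update S l s) - welfare a u S := by
  have hrest : ∑ r ∈ univ.filter (fun r => ¬a l r = true), u r (linkMin a (update S l s) r) =
      ∑ r ∈ univ.filter (fun r => ¬a l r = true), u r (linkMin a S r) :=
    sum_congr rfl fun r hr => by
      rw [linkMin_update_of_eq_false a s (by simpa using (mem_filter.1 hr).2)]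
  simp only [payoff, welfare, one_mul]
  rw [← sum_filter_add_sum_filter_not univ (fun r => a l r = true),
    ← sum_filter_add_sum_filter_not univ (fun r => a l r = true) (fun r => u r (linkMin a S r)),
    hrest]
  ring

lemma nashEq_of_isMaxOn_welfare {c : Fin L → ℝ} {u : Fin R → ℝ → ℝ} {S : Fin L → Fin R → ℝ}
    (hS : FeasibleProfile a c S) (hmax : IsMaxOn (welfare a u) {S | FeasibleProfile a c S} S) :
    NashEq a c (fun _ => 1) u S := by
  intro l s hs
  have hdev : FeasibleProfile a c (update S l s) :=
    (forall_update_iff S fun k t => FeasibleStrat a c k t).2 ⟨hs, fun k _ => hS k⟩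
  have hle : welfare a u (update S l s) ≤ welfare a u S := hmax hdev
  linarith [payoff_update_sub_payoff a u S l s]

end CapacityGame

lemma continuous_isoelastic (w : ℝ) {γ : ℝ} (hγ : γ < 1) :
    Continuous fun x : ℝ => w * x ^ (1 - γ) / (1 - γ) :=
  ((Real.continuous_rpow_const (by linarith)).const_mul w).div_const _

theorem exists_welfare_optimal_nash_uniform_general
    {L R : ℕ} (a : Fin L → Fin R → Bool) (c : Fin L → ℝ) (w : Fin R → ℝ) (γ : ℝ)
    (u : Fin R → ℝ → ℝ)
    (hc : ∀ l, 0 < c l)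
    (hflow : ∀ r : Fin R, ∃ l, a l r = true)
    (hγ1 : γ < 1)
    (hu : ∀ r x, u r x = w r * x ^ (1 - γ) / (1 - γ)) :
    ∃ S : Fin L → Fin R → ℝ, FeasibleProfile a c S ∧ NashEq a c (fun _ => 1) u S ∧
      IsGreatest {v | ∃ S', FeasibleProfile a c S' ∧ v = welfare a u S'} (welfare a u S) ∧
      IsGreatest {v | ∃ x : Fin R → ℝ, (∀ r, 0 ≤ x r) ∧
          (∀ l, (∑ r ∈ Finset.univ.filter (fun r => a l r = true), x r) ≤ c l) ∧
          v = ∑ r, u r (x r)} (welfare a u S) ∧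
      IsGreatest {v | ∃ S', FeasibleProfile a c S' ∧ NashEq a c (fun _ => 1) u S' ∧
          v = welfare a u S'} (welfare a u S) := by
  have hu_cont : ∀ r, Continuous (u r) := fun r =>
    (funext (hu r) : u r = _) ▸ continuous_isoelastic (w r) hγ1
  obtain ⟨x, hx, hxmax⟩ := (isCompact_numFeasibleSet a c hflow).exists_isMaxOn
    (numFeasibleSet_nonempty a fun l => (hc l).le)
    (continuous_finsetSum _ fun r _ => (hu_cont r).comp (continuous_apply r)).continuousOn
  set S := profileOfRates a x
  have hS := feasibleProfile_profileOfRates a hx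
  have hwelfare : welfare a u S = ∑ r, u r (x r) := welfare_profileOfRates a u hflow
  have hopt : IsMaxOn (welfare a u) {S | FeasibleProfile a c S} S := fun S' hS' =>
    hwelfare ▸ hxmax (hS'.linkMin_mem_numFeasibleSet a hflow)
  have hnash := nashEq_of_isMaxOn_welfare a hS hopt
  refine ⟨S, hS, hnash, ⟨⟨S, hS, rfl⟩, ?_⟩, ⟨⟨x, hx.1, hx.2, hwelfare⟩, ?_⟩,
    ⟨⟨S, hS, hnash, rfl⟩, ?_⟩⟩
  · rintro v ⟨S', hS', rfl⟩
    exact hopt hS'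
  · rintro v ⟨x', hx'0, hx'c, rfl⟩
    exact hwelfare ▸ hxmax ⟨hx'0, hx'c⟩
  · rintro v ⟨S', hS', -, rfl⟩
    exact hopt hS'

/-- with uniform payoffs and isoelastic utilities there is a pure Nash
equilibrium achieving the maximal social welfare over all feasible profiles, which also
equals the NUM optimum; in particular the Price of Stability is 1 (the best equilibrium
welfare equals the best overall welfare). -/
theorem exists_welfare_optimal_nash_uniform
    {L R : ℕ} (a : Fin L → Fin R → Bool) (c : Fin L → ℝ) (w : Fin R → ℝ) (γ : ℝ)
    (u : Fin R → ℝ → ℝ)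
    (hc : ∀ l, 0 < c l)
    (hflow : ∀ r : Fin R, ∃ l, a l r = true)
    (hw : ∀ r, 0 < w r) (hγ0 : 0 < γ) (hγ1 : γ < 1)
    (hu : ∀ r x, u r x = w r * x ^ (1 - γ) / (1 - γ)) :
    ∃ S : Fin L → Fin R → ℝ, FeasibleProfile a c S ∧ NashEq a c (fun _ => 1) u S ∧
      IsGreatest {v | ∃ S', FeasibleProfile a c S' ∧ v = welfare a u S'} (welfare a u S) ∧
      IsGreatest {v | ∃ x : Fin R → ℝ, (∀ r, 0 ≤ x r) ∧
          (∀ l, (∑ r ∈ Finset.univ.filter (fun r => a l r = true), x r) ≤ c l) ∧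
          v = ∑ r, u r (x r)} (welfare a u S) ∧
      IsGreatest {v | ∃ S', FeasibleProfile a c S' ∧ NashEq a c (fun _ => 1) u S' ∧
          v = welfare a u S'} (welfare a u S) :=
  exists_welfare_optimal_nash_uniform_general a c w γ u hc hflow hγ1 hu
end

section
/- Consider the serial network: L ≥ 2 links of equal capacity C > 0 connected serially, with L + 1 flows, where for l = 1,…,L flow l is local to link l (a_{ll} = 1 and a_{kl} = 0 for k ≠ l) and flow L+1 passes through all L links (a_{l,L+1} = 1 for all l). Utilities are isoelastic, u_r(x) = w_r x^{1-γ}/(1-γ) with w_r > 0 and 0 < γ < 1. Then, for any weights b_r ≥ 0, the strategy profile in which each link l allocates its entire capacity to its local flow and nothing to the long flow (s_{ll} = C, s_{l,L+1} = 0, all other entries 0) is a pure Nash equilibrium of the capacity allocation game. -/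
open Finset

/-! The long flow gets nothing from the other links, so its bottleneck rate stays 0 whatever link
`l` does; the only flow of `l` whose rate `l` controls is then its local flow, and giving that
flow the whole capacity maximises a nondecreasing utility. -/

theorem linkMin_eq_of_forall_le {L R : ℕ} {a : Fin L → Fin R → Bool} {S : Fin L → Fin R → ℝ}
    {r : Fin R} {l : Fin L} (hl : a l r = true) (hmin : ∀ k, a k r = true → S l r ≤ S k r) :
    linkMin a S r = S l r :=
  IsLeast.csInf_eq ⟨⟨l, hl, rfl⟩, by rintro _ ⟨k, hk, rfl⟩; exact hmin k hk⟩

theorem linkMin_eq_zero {L R : ℕ} {a : Fin L → Fin R → Bool} {S : Fin L → Fin R → ℝ}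
    {r : Fin R} {l : Fin L} (hl : a l r = true) (hzero : S l r = 0)
    (hnonneg : ∀ k, a k r = true → 0 ≤ S k r) : linkMin a S r = 0 :=
  hzero ▸ linkMin_eq_of_forall_le hl fun k hk => hzero ▸ hnonneg k hk

noncomputable def isoelastic (w γ x : ℝ) : ℝ := w * x ^ (1 - γ) / (1 - γ)

theorem isoelastic_monotoneOn {w γ : ℝ} (hw : 0 ≤ w) (hγ : γ < 1) :
    MonotoneOn (isoelastic w γ) (Set.Ici 0) := fun x hx y _ hxy => by
  have hexp : 0 < 1 - γ := sub_pos.mpr hγ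
  unfold isoelastic
  gcongr

section SerialNetwork

def IsSerialRouting {L : ℕ} (a : Fin L → Fin (L + 1) → Bool) : Prop :=
  ∀ l r, a l r = (decide ((r : ℕ) = (l : ℕ)) || decide ((r : ℕ) = L))

variable {L : ℕ} {a : Fin L → Fin (L + 1) → Bool}

theorem IsSerialRouting.apply_castSucc_iff
    (ha : IsSerialRouting a) (k l : Fin L) : a k l.castSucc = true ↔ k = l := by
  simp [ha k, Fin.ext_iff, l.isLt.ne, @eq_comm _ (l : ℕ)]

theorem IsSerialRouting.apply_last
    (ha : IsSerialRouting a) (k : Fin L) :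
    a k (Fin.last L) = true := by
  simp [ha k]

theorem IsSerialRouting.filter_eq
    (ha : IsSerialRouting a) (l : Fin L) :
    univ.filter (fun r => a l r = true) = {l.castSucc, Fin.last L} := by
  ext r
  simp [ha l, Fin.ext_iff]

theorem IsSerialRouting.linkMin_castSucc
    (ha : IsSerialRouting a)
    (S : Fin L → Fin (L + 1) → ℝ) (l : Fin L) : linkMin a S l.castSucc = S l l.castSucc :=
  linkMin_eq_of_forall_le ((ha.apply_castSucc_iff l l).mpr rfl) fun k hk =>
    ((ha.apply_castSucc_iff k l).mp hk) ▸ le_rfl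

theorem IsSerialRouting.payoff_eq
    (ha : IsSerialRouting a)
    (b : Fin (L + 1) → ℝ) (u : Fin (L + 1) → ℝ → ℝ) (l : Fin L) (S : Fin L → Fin (L + 1) → ℝ) :
    payoff a b u l S = b l.castSucc * u l.castSucc (S l l.castSucc)
      + b (Fin.last L) * u (Fin.last L) (linkMin a S (Fin.last L)) := by
  rw [payoff, ha.filter_eq, sum_pair (Fin.castSucc_lt_last l).ne,
    ha.linkMin_castSucc]

end SerialNetwork

theorem serial_network_local_profile_is_nash_general
    (L : ℕ) (hL : 2 ≤ L) (C γ : ℝ) (w b : Fin (L + 1) → ℝ)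
    (u : Fin (L + 1) → ℝ → ℝ)
    (a : Fin L → Fin (L + 1) → Bool) (S : Fin L → Fin (L + 1) → ℝ)
    (hw : ∀ r, 0 < w r) (hb : ∀ r, 0 ≤ b r)
    (hγ1 : γ < 1)
    (hu : ∀ r x, u r x = w r * x ^ (1 - γ) / (1 - γ))
    -- flow l (l < L) is local to link l; flow L passes through every link
    (ha : ∀ l r, a l r = (decide ((r : ℕ) = (l : ℕ)) || decide ((r : ℕ) = L)))
    -- each link allocates all of its capacity to its local flow, none to the long flow
    (hS : ∀ l r, S l r = if (r : ℕ) = (l : ℕ) then C else 0) :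
    NashEq a (fun _ => C) b u S := by
  have hrouting : IsSerialRouting a := ha
  have hS_last : ∀ k, S k (Fin.last L) = 0 := fun k => by simp [hS, k.isLt.ne']
  rintro l s' ⟨hs'_nonneg, -, hs'_sum⟩
  have hs'_local : s' l.castSucc ≤ C := by
    rw [hrouting.filter_eq, sum_pair (Fin.castSucc_lt_last l).ne] at hs'_sum
    linarith [hs'_nonneg (Fin.last L)]
  have hS_local : S l l.castSucc = C := by simp [hS]
  obtain ⟨k, hkl⟩ : ∃ k : Fin L, k ≠ l := Fintype.exists_ne_of_one_lt_card (by rw [Fintype.card_fin]; omega) l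
  have hmin_last : linkMin a S (Fin.last L) = 0 :=
    linkMin_eq_zero (hrouting.apply_last l) (hS_last l) fun k _ => (hS_last k).ge
  have hmin_last' : linkMin a (Function.update S l s') (Fin.last L) = 0 := by
    refine linkMin_eq_zero (l := k) (hrouting.apply_last k)
      (by rw [Function.update_of_ne hkl, hS_last]) fun j _ => ?_
    rcases eq_or_ne j l with rfl | hjl
    · simpa using hs'_nonneg (Fin.last L)
    · rw [Function.update_of_ne hjl, hS_last]
  rw [hrouting.payoff_eq, hrouting.payoff_eq, hmin_last, hmin_last', Function.update_self,
    hS_local]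
  have hu_local : u l.castSucc (s' l.castSucc) ≤ u l.castSucc C := by
    simp only [hu]
    exact isoelastic_monotoneOn (hw _).le hγ1 (hs'_nonneg _)
      ((hs'_nonneg _).trans hs'_local) hs'_local
  gcongr ?_ + _
  exact mul_le_mul_of_nonneg_left hu_local (hb _)

/-- in the serial network (L ≥ 2 links of equal capacity C, one local flow
per link and one long flow through all links), the profile in which each link gives all
its capacity to its local flow and nothing to the long flow is a pure Nash equilibrium,
for isoelastic utilities and any nonnegative weights. -/
theorem serial_network_local_profile_is_nash
    (L : ℕ) (hL : 2 ≤ L) (C γ : ℝ) (w b : Fin (L + 1) → ℝ)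
    (u : Fin (L + 1) → ℝ → ℝ)
    (a : Fin L → Fin (L + 1) → Bool) (S : Fin L → Fin (L + 1) → ℝ)
    (hC : 0 < C)
    (hw : ∀ r, 0 < w r) (hb : ∀ r, 0 ≤ b r)
    (hγ0 : 0 < γ) (hγ1 : γ < 1)
    (hu : ∀ r x, u r x = w r * x ^ (1 - γ) / (1 - γ))
    -- flow l (l < L) is local to link l; flow L passes through every link
    (ha : ∀ l r, a l r = (decide ((r : ℕ) = (l : ℕ)) || decide ((r : ℕ) = L)))
    -- each link allocates all of its capacity to its local flow, none to the long flow
    (hS : ∀ l r, S l r = if (r : ℕ) = (l : ℕ) then C else 0) :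
    NashEq a (fun _ => C) b u S :=
  serial_network_local_profile_is_nash_general L hL C γ w b u a S hw hb hγ1 hu ha hS
end
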